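/- Let (R, α) be a multiplicative Hom-Lie conformal superalgebra. Then [Der(R)_λ C(R)] ⊆ C(R)[λ]: for any homogeneous D ∈ Der_{α^k}(R) and D' ∈ C_{α^s}(R), the commutator [D_λ D'] is an α^{k+s}-centroid of R with polynomial coefficients in λ. -/

import Mathlib

noncomputable section

namespace HLCS

open scoped BigOperators

/-- Evaluation at `l : ℂ` of a polynomial (in `λ`) with coefficients in `M`,
encoded as a finitely supported family of coefficients. -/
def pev {M : Type} [AddCommGroup M] [Module ℂ M] (l : ℂ) (p : ℕ →₀ M) : M :=
  p.sum fun n r => l ^ n • r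

/-- Evaluation of a polynomial with coefficients in `M` at an operator `T`
(used for substitutions such as `-λ - ∂`). -/
def pevOp {M : Type} [AddCommGroup M] [Module ℂ M] (T : Module.End ℂ M) (p : ℕ →₀ M) : M :=
  p.sum fun n r => (T ^ n) r

/-- The super sign `(-1)^{|a||b|}` attached to parities `i`, `j`. -/
def sg (i j : ZMod 2) : ℂ := (-1 : ℂ) ^ (i * j).val

/-- The data of a `ℤ₂`-graded `ℂ[∂]`-module `R` with an endomorphism `α` and a
`ℂ`-bilinear `λ`-bracket with values in `ℂ[λ] ⊗ R` (encoded by its coefficients). -/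
structure Data (R : Type) [AddCommGroup R] [Module ℂ R] where
  der : Module.End ℂ R
  alpha : Module.End ℂ R
  G : ZMod 2 → Submodule ℂ R
  br : R →ₗ[ℂ] R →ₗ[ℂ] (ℕ →₀ R)

namespace Data

variable {R : Type} [AddCommGroup R] [Module ℂ R] (S : Data R)

/-- `[a_λ b]` evaluated at `λ = l`. -/
def lb (l : ℂ) (a b : R) : R := pev l (S.br a b)

/-- `[a_{-l-∂} b]` : the bracket with `-l - ∂` substituted for `λ`. -/
def lbOp (l : ℂ) (a b : R) : R :=
  pevOp ((-l) • (1 : Module.End ℂ R) - S.der) (S.br a b)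

/-- Multiplicativity: `α [a_λ b] = [α(a)_λ α(b)]`. -/
def Mult : Prop := ∀ (l : ℂ) (a b : R), S.alpha (S.lb l a b) = S.lb l (S.alpha a) (S.alpha b)

end Data

variable {R : Type} [AddCommGroup R] [Module ℂ R]

/-- `(R, α)` with the given data is a Hom-Lie conformal superalgebra.
All polynomial identities in `λ, μ` are stated by evaluating at arbitrary
complex numbers (which is equivalent, `ℂ` being infinite). -/
structure IsHLCS (S : Data R) : Prop where
  internal : DirectSum.IsInternal S.G
  der_even : ∀ i, ∀ a ∈ S.G i, S.der a ∈ S.G i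
  alpha_even : ∀ i, ∀ a ∈ S.G i, S.alpha a ∈ S.G i
  alpha_der : ∀ a, S.alpha (S.der a) = S.der (S.alpha a)
  br_grade : ∀ i j, ∀ a ∈ S.G i, ∀ b ∈ S.G j, ∀ n, S.br a b n ∈ S.G (i + j)
  conf_left : ∀ (l : ℂ) (a b : R), S.lb l (S.der a) b = -l • S.lb l a b
  conf_right : ∀ (l : ℂ) (a b : R), S.lb l a (S.der b) = S.der (S.lb l a b) + l • S.lb l a b
  skew : ∀ i j, ∀ a ∈ S.G i, ∀ b ∈ S.G j, ∀ l : ℂ,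
    S.lb l a b = (-sg i j) • S.lbOp l b a
  jacobi : ∀ i j, ∀ a ∈ S.G i, ∀ b ∈ S.G j, ∀ (c : R) (l m : ℂ),
    S.lb l (S.alpha a) (S.lb m b c) =
      S.lb (l + m) (S.lb l a b) (S.alpha c) + sg i j • S.lb m (S.alpha b) (S.lb l a c)

end HLCS
namespace HLCS

variable {R : Type} [AddCommGroup R] [Module ℂ R]

/-- A homogeneous conformal linear map of parity `d` on `R`, encoded as the family of
its evaluations `F l : R → R` (`l : ℂ`): it is `ℂ`-linear, polynomial in `l`, and
satisfies `F_λ(∂a) = (∂ + λ) F_λ(a)`. -/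
structure IsConfMap (S : Data R) (d : ZMod 2) (F : ℂ → R → R) : Prop where
  map_add : ∀ (l : ℂ) (a b : R), F l (a + b) = F l a + F l b
  map_smul : ∀ (l c : ℂ) (a : R), F l (c • a) = c • F l a
  poly : ∀ a : R, ∃ p : ℕ →₀ R, ∀ l : ℂ, F l a = pev l p
  conf : ∀ (l : ℂ) (a : R), F l (S.der a) = S.der (F l a) + l • F l a
  grade : ∀ i, ∀ a ∈ S.G i, ∀ l : ℂ, F l a ∈ S.G (i + d)

/-- Membership in `Ω`: a homogeneous conformal linear map commuting with `α`. -/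
def InOmega (S : Data R) (d : ZMod 2) (F : ℂ → R → R) : Prop :=
  IsConfMap S d F ∧ ∀ (l : ℂ) (a : R), F l (S.alpha a) = S.alpha (F l a)

/-- An `α^k`-derivation of parity `d`. -/
def IsDer (S : Data R) (k : ℕ) (d : ZMod 2) (F : ℂ → R → R) : Prop :=
  InOmega S d F ∧ ∀ i, ∀ a ∈ S.G i, ∀ (b : R) (l m : ℂ),
    F l (S.lb m a b) =
      S.lb (l + m) (F l a) ((S.alpha ^ k) b) +
        ((-1 : ℂ) ^ ((i * d).val)) • S.lb m ((S.alpha ^ k) a) (F l b)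

/-- The commutator `[D_λ D']_μ (a) = D_λ(D'_{μ-λ}(a)) - (-1)^{|D||D'|} D'_{μ-λ}(D_λ(a))`,
with `e = (-1)^{|D||D'|}`; first argument `l` is `λ`, second `m` is `μ`. -/
def brkt (e : ℂ) (F G : ℂ → R → R) : ℂ → ℂ → R → R :=
  fun l m a => F l (G (m - l) a) - e • G (m - l) (F l a)

/-- The twist `α'(D) = D ∘ α`. -/
def tw (S : Data R) (F : ℂ → R → R) : ℂ → R → R := fun l a => F l (S.alpha a)

/-- A generalized `α^k`-derivation of parity `d`. -/
def IsGDer (S : Data R) (k : ℕ) (d : ZMod 2) (F : ℂ → R → R) : Prop :=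
  InOmega S d F ∧ ∃ F' F'' : ℂ → R → R, InOmega S d F' ∧ InOmega S d F'' ∧
    ∀ i, ∀ a ∈ S.G i, ∀ (b : R) (l m : ℂ),
      S.lb (l + m) (F m a) ((S.alpha ^ k) b) +
        ((-1 : ℂ) ^ ((d * i).val)) • S.lb l ((S.alpha ^ k) a) (F' m b) = F'' m (S.lb l a b)

/-- An `α^k`-quasiderivation of parity `d`. -/
def IsQDer (S : Data R) (k : ℕ) (d : ZMod 2) (F : ℂ → R → R) : Prop :=
  InOmega S d F ∧ ∃ F' : ℂ → R → R, InOmega S d F' ∧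
    ∀ i, ∀ a ∈ S.G i, ∀ (b : R) (l m : ℂ),
      S.lb (l + m) (F m a) ((S.alpha ^ k) b) +
        ((-1 : ℂ) ^ ((d * i).val)) • S.lb l ((S.alpha ^ k) a) (F m b) = F' m (S.lb l a b)

/-- An `α^k`-centroid of parity `d`. -/
def IsCent (S : Data R) (k : ℕ) (d : ZMod 2) (F : ℂ → R → R) : Prop :=
  InOmega S d F ∧ ∀ i, ∀ a ∈ S.G i, ∀ (b : R) (l m : ℂ),
    S.lb (l + m) (F m a) ((S.alpha ^ k) b) =
      ((-1 : ℂ) ^ ((d * i).val)) • S.lb l ((S.alpha ^ k) a) (F m b) ∧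
    S.lb (l + m) (F m a) ((S.alpha ^ k) b) = F m (S.lb l a b)

/-- An `α^k`-quasicentroid of parity `d`. -/
def IsQC (S : Data R) (k : ℕ) (d : ZMod 2) (F : ℂ → R → R) : Prop :=
  InOmega S d F ∧ ∀ i, ∀ a ∈ S.G i, ∀ (b : R) (l m : ℂ),
    S.lb (l + m) (F m a) ((S.alpha ^ k) b) =
      ((-1 : ℂ) ^ ((d * i).val)) • S.lb l ((S.alpha ^ k) a) (F m b)

/-- An `α^k`-central derivation of parity `d`. -/
def IsZDer (S : Data R) (k : ℕ) (d : ZMod 2) (F : ℂ → R → R) : Prop :=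
  InOmega S d F ∧ ∀ (a b : R) (l m : ℂ),
    S.lb (l + m) (F m a) ((S.alpha ^ k) b) = 0 ∧ F m (S.lb l a b) = 0

/-- Membership in the center `Z(R)`. -/
def IsCentral (S : Data R) (x : R) : Prop := ∀ (l : ℂ) (y : R), S.lb l x y = 0

end HLCS
/-!
The commutator `[D_λ D']_μ = D_λ ∘ D'_{μ-λ} - (-1)^{|D||D'|} D'_{μ-λ} ∘ D_λ` is again a
homogeneous conformal linear map commuting with `α`; it is polynomial in `μ` because
substituting `μ - λ` for the variable preserves polynomials. For the centroid identities,
expand `[([D_λ D']_μ a)_{λ'+μ} α^{k+s} b]` by the derivation rule for `D_λ` applied to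
`[(D'_{μ-λ} a)_{λ'+μ-λ} α^s b]`. Each of the three resulting brackets has `D'_{μ-λ}` in its
left slot, so the centroid property moves `D'_{μ-λ}` either to the right slot or outside the
bracket. One more application of the derivation rule (to `D_λ [α^s a_{λ'} D'_{μ-λ} b]`,
resp. to `D_λ [a_{λ'} b]`) brings both sides to the same combination of brackets; the sign
`(-1)^{|D||D'|}` in the commutator is exactly what makes the coefficients agree.
-/

namespace HLCS

section Polynomial

variable {M N : Type} [AddCommGroup M] [Module ℂ M] [AddCommGroup N] [Module ℂ N]

def pevLinear (l : ℂ) : (ℕ →₀ M) →ₗ[ℂ] M := Finsupp.lsum ℂ fun n => l ^ n • LinearMap.id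

theorem pevLinear_apply (l : ℂ) (p : ℕ →₀ M) : pevLinear l p = pev l p := rfl

theorem pev_single (l : ℂ) (n : ℕ) (r : M) : pev l (Finsupp.single n r) = l ^ n • r := by
  simp [← pevLinear_apply, pevLinear]

theorem pev_add (l : ℂ) (p q : ℕ →₀ M) : pev l (p + q) = pev l p + pev l q := by
  simp only [← pevLinear_apply, map_add]

def IsPolyFun (f : ℂ → M) : Prop := ∃ p : ℕ →₀ M, ∀ l, f l = pev l p

theorem isPolyFun_sub_pow_smul (l₀ : ℂ) (n : ℕ) (r : M) :
    IsPolyFun fun l => (l - l₀) ^ n • r := by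
  refine ⟨∑ j ∈ Finset.range (n + 1),
    Finsupp.single j (((-l₀) ^ (n - j) * n.choose j) • r), fun l => ?_⟩
  dsimp only
  rw [← pevLinear_apply, map_sum, sub_eq_add_neg, add_pow, Finset.sum_smul]
  refine Finset.sum_congr rfl fun j _ => ?_
  rw [pevLinear_apply, pev_single, smul_smul, mul_assoc]

namespace IsPolyFun

variable {f g : ℂ → M}

theorem add (hf : IsPolyFun f) (hg : IsPolyFun g) : IsPolyFun fun l => f l + g l := by
  obtain ⟨p, hp⟩ := hf
  obtain ⟨q, hq⟩ := hg
  exact ⟨p + q, fun l => by simp only [hp, hq, pev_add]⟩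

theorem sub_smul (hf : IsPolyFun f) (hg : IsPolyFun g) (c : ℂ) :
    IsPolyFun fun l => f l - c • g l := by
  obtain ⟨p, hp⟩ := hf
  obtain ⟨q, hq⟩ := hg
  exact ⟨p - c • q, fun l => by simp only [hp, hq, ← pevLinear_apply, map_sub, map_smul]⟩

theorem map (hf : IsPolyFun f) (φ : M →ₗ[ℂ] N) : IsPolyFun fun l => φ (f l) := by
  obtain ⟨p, hp⟩ := hf
  refine ⟨Finsupp.mapRange φ φ.map_zero p, fun l => ?_⟩
  dsimp only
  rw [hp, pev, pev, map_finsuppSum, Finsupp.sum_mapRange_index fun _ => smul_zero _]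
  simp only [map_smul]

theorem comp_sub (hf : IsPolyFun f) (l₀ : ℂ) :
    IsPolyFun fun l => f (l - l₀) := by
  obtain ⟨p, hp⟩ := hf
  simp only [hp]
  clear hp
  induction p using Finsupp.induction with
  | zero => exact ⟨0, fun l => rfl⟩
  | single_add n r p _ _ ih =>
    simpa only [pev_add, pev_single] using (isPolyFun_sub_pow_smul l₀ n r).add ih

end IsPolyFun

end Polynomial

theorem sg_add_left (i j k : ZMod 2) : sg (i + j) k = sg i k * sg j k := by
  rw [sg, sg, sg, add_mul, ZMod.val_add, ← neg_one_pow_eq_pow_mod_two, pow_add]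

theorem sg_comm (i j : ZMod 2) : sg i j = sg j i := by
  rw [sg, sg, mul_comm]

theorem sg_add_right (i j k : ZMod 2) : sg i (j + k) = sg i j * sg i k := by
  rw [sg_comm, sg_add_left, sg_comm j, sg_comm k]

theorem sg_mul_self (i j : ZMod 2) : sg i j * sg i j = 1 := by
  rw [sg, ← mul_pow, neg_one_mul, neg_neg, one_pow]

section ConformalMaps

variable {R : Type} [AddCommGroup R] [Module ℂ R] {S : Data R}

namespace Data

theorem lb_eq_compr₂ (S : Data R) (l : ℂ) (a b : R) :
    S.lb l a b = S.br.compr₂ (pevLinear l) a b := rfl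

theorem lb_sub_left (S : Data R) (l : ℂ) (a a' b : R) :
    S.lb l (a - a') b = S.lb l a b - S.lb l a' b := by
  simp only [lb_eq_compr₂, map_sub, LinearMap.sub_apply]

theorem lb_smul_left (S : Data R) (l c : ℂ) (a b : R) : S.lb l (c • a) b = c • S.lb l a b := by
  simp only [lb_eq_compr₂, map_smul, LinearMap.smul_apply]

theorem lb_sub_right (S : Data R) (l : ℂ) (a b b' : R) :
    S.lb l a (b - b') = S.lb l a b - S.lb l a b' := by
  simp only [lb_eq_compr₂, map_sub]

theorem lb_smul_right (S : Data R) (l c : ℂ) (a b : R) : S.lb l a (c • b) = c • S.lb l a b := by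
  simp only [lb_eq_compr₂, map_smul]

theorem alpha_pow_add_apply (S : Data R) (k s : ℕ) (a : R) :
    (S.alpha ^ (k + s)) a = (S.alpha ^ k) ((S.alpha ^ s) a) := by
  rw [pow_add, Module.End.mul_apply]

end Data

theorem alpha_pow_mem (hα : ∀ i, ∀ a ∈ S.G i, S.alpha a ∈ S.G i) (t : ℕ) {i : ZMod 2} {a : R}
    (ha : a ∈ S.G i) : (S.alpha ^ t) a ∈ S.G i := by
  induction t with
  | zero => exact ha
  | succ t ih => rw [pow_succ', Module.End.mul_apply]; exact hα _ _ ih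

variable {d d' : ZMod 2} {F G : ℂ → R → R}

namespace IsConfMap

def toLinearMap (hF : IsConfMap S d F) (l : ℂ) : R →ₗ[ℂ] R where
  toFun := F l
  map_add' := hF.map_add l
  map_smul' := hF.map_smul l

theorem isPolyFun (hF : IsConfMap S d F) (a : R) : IsPolyFun fun l => F l a := hF.poly a

end IsConfMap

theorem isConfMap_brkt (hF : IsConfMap S d F) (hG : IsConfMap S d' G) (e l : ℂ) :
    IsConfMap S (d + d') (brkt e F G l) where
  map_add m a b := by
    simp only [brkt, hF.map_add, hG.map_add, smul_add]
    abel
  map_smul m c a := by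
    simp only [brkt, hF.map_smul, hG.map_smul]
    module
  poly a := (((hG.isPolyFun a).comp_sub l).map (hF.toLinearMap l)).sub_smul
    ((hG.isPolyFun (F l a)).comp_sub l) e
  conf m a := by
    simp only [brkt, hG.conf, hF.map_add, hF.map_smul, hF.conf, hG.map_add, hG.map_smul,
      map_sub, map_smul]
    module
  grade i a ha m := by
    have hFG := hF.grade _ _ (hG.grade i a ha (m - l)) l
    have hGF := hG.grade _ _ (hF.grade i a ha l) (m - l)
    rw [add_right_comm] at hFG
    rw [← add_assoc]
    exact sub_mem hFG (Submodule.smul_mem _ e hGF)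

theorem InOmega.map_alpha_pow (hF : InOmega S d F) (t : ℕ) (l : ℂ) (a : R) :
    F l ((S.alpha ^ t) a) = (S.alpha ^ t) (F l a) := by
  induction t generalizing a with
  | zero => rfl
  | succ t ih => rw [pow_succ, Module.End.mul_apply, ih, hF.2, Module.End.mul_apply]

theorem inOmega_brkt (hF : InOmega S d F) (hG : InOmega S d' G) (e l : ℂ) :
    InOmega S (d + d') (brkt e F G l) :=
  ⟨isConfMap_brkt hF.1 hG.1 e l, fun m a => by simp only [brkt, hF.2, hG.2, map_sub, map_smul]⟩

variable {k s : ℕ} {i : ZMod 2} {a : R}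

theorem IsDer.map_lb (hF : IsDer S k d F) (ha : a ∈ S.G i) (b : R) (l m : ℂ) :
    F l (S.lb m a b) =
      S.lb (l + m) (F l a) ((S.alpha ^ k) b) + sg i d • S.lb m ((S.alpha ^ k) a) (F l b) :=
  hF.2 i a ha b l m

theorem IsCent.lb_map_left_eq_lb_map_right (hG : IsCent S s d' G) (ha : a ∈ S.G i) (b : R)
    (l m : ℂ) :
    S.lb (l + m) (G m a) ((S.alpha ^ s) b) = sg d' i • S.lb l ((S.alpha ^ s) a) (G m b) :=
  (hG.2 i a ha b l m).1

theorem IsCent.lb_map_left_eq_map_lb (hG : IsCent S s d' G) (ha : a ∈ S.G i) (b : R)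
    (l m : ℂ) : S.lb (l + m) (G m a) ((S.alpha ^ s) b) = G m (S.lb l a b) :=
  (hG.2 i a ha b l m).2

theorem lb_brkt_left (hF : IsDer S k d F) (hG : InOmega S d' G) (ha : a ∈ S.G i) (b : R)
    (e l l' m : ℂ) :
    S.lb (l' + m) (brkt e F G l m a) ((S.alpha ^ (k + s)) b) =
      F l (S.lb (l' + (m - l)) (G (m - l) a) ((S.alpha ^ s) b))
        - sg (i + d') d •
          S.lb (l' + (m - l)) (G (m - l) ((S.alpha ^ k) a)) ((S.alpha ^ s) (F l b))
        - e • S.lb (l' + l + (m - l)) (G (m - l) (F l a)) ((S.alpha ^ s) ((S.alpha ^ k) b)) := by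
  rw [hF.map_lb (hG.1.grade i a ha (m - l)), brkt, Data.lb_sub_left, Data.lb_smul_left,
    hF.1.map_alpha_pow, ← hG.map_alpha_pow, ← S.alpha_pow_add_apply,
    ← S.alpha_pow_add_apply, add_comm s k,
    show l + (l' + (m - l)) = l' + m by ring, show l' + l + (m - l) = l' + m by ring]
  abel

theorem lb_brkt_left_eq_lb_right (hF : IsDer S k d F) (hG : IsCent S s d' G)
    (hα : ∀ i, ∀ a ∈ S.G i, S.alpha a ∈ S.G i) (ha : a ∈ S.G i) (b : R) (l l' m : ℂ) :
    S.lb (l' + m) (brkt (sg d d') F G l m a) ((S.alpha ^ (k + s)) b) =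
      sg (d + d') i • S.lb l' ((S.alpha ^ (k + s)) a) (brkt (sg d d') F G l m b) := by
  rw [lb_brkt_left hF hG.1 ha, hG.lb_map_left_eq_lb_map_right ha,
    hG.lb_map_left_eq_lb_map_right (alpha_pow_mem hα k ha),
    hG.lb_map_left_eq_lb_map_right (hF.1.1.grade i a ha l), hF.1.1.map_smul,
    hF.map_lb (alpha_pow_mem hα s ha), hF.1.map_alpha_pow, ← hG.1.map_alpha_pow,
    brkt, Data.lb_sub_right, Data.lb_smul_right, ← S.alpha_pow_add_apply,
    ← S.alpha_pow_add_apply, add_comm s k, add_comm l l']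
  match_scalars <;> simp only [sg_add_left, sg_add_right, sg_comm i d, sg_comm d' d]
  · linear_combination (-sg d' i) * sg_mul_self d d'
  · ring
  · ring

theorem lb_brkt_left_eq_brkt_lb (hF : IsDer S k d F) (hG : IsCent S s d' G)
    (hα : ∀ i, ∀ a ∈ S.G i, S.alpha a ∈ S.G i) (ha : a ∈ S.G i) (b : R) (l l' m : ℂ) :
    S.lb (l' + m) (brkt (sg d d') F G l m a) ((S.alpha ^ (k + s)) b) =
      brkt (sg d d') F G l m (S.lb l' a b) := by
  rw [lb_brkt_left hF hG.1 ha, hG.lb_map_left_eq_map_lb ha,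
    hG.lb_map_left_eq_map_lb (alpha_pow_mem hα k ha),
    hG.lb_map_left_eq_map_lb (hF.1.1.grade i a ha l), brkt, hF.map_lb ha, hG.1.1.map_add,
    hG.1.1.map_smul, add_comm l l']
  match_scalars
  · rfl
  · rw [sg_add_left, sg_comm d' d]
    ring
  · rfl

end ConformalMaps

variable {R : Type} [AddCommGroup R] [Module ℂ R]

theorem der_bracket_cent_general (S : Data R) (hS : IsHLCS S)
    (k s : ℕ) (d d' : ZMod 2) (F G : ℂ → R → R)
    (hF : IsDer S k d F) (hG : IsCent S s d' G) :
    ∀ l : ℂ, IsCent S (k + s) (d + d') (brkt ((-1 : ℂ) ^ ((d * d').val)) F G l) := fun l =>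
  ⟨inOmega_brkt hF.1 hG.1 _ l, fun _ _ ha b l' m =>
    ⟨lb_brkt_left_eq_lb_right hF hG hS.alpha_even ha b l l' m,
      lb_brkt_left_eq_brkt_lb hF hG hS.alpha_even ha b l l' m⟩⟩

/-- For a multiplicative Hom-Lie conformal superalgebra `(R, α)`,
`[Der(R)_λ C(R)] ⊆ C(R)[λ]`: the commutator of a homogeneous `α^k`-derivation with a
homogeneous `α^s`-centroid is an `α^{k+s}`-centroid (with polynomial coefficients
in `λ`). -/
theorem der_bracket_cent (S : Data R) (hS : IsHLCS S) (hmult : S.Mult)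
    (k s : ℕ) (d d' : ZMod 2) (F G : ℂ → R → R)
    (hF : IsDer S k d F) (hG : IsCent S s d' G) :
    ∀ l : ℂ, IsCent S (k + s) (d + d') (brkt ((-1 : ℂ) ^ ((d * d').val)) F G l) :=
  der_bracket_cent_general S hS k s d d' F G hF hG

end HLCS
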